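/- arXiv:0802.1952 — 2 statements merged into one kernel-verified Lean document; each statement's English description precedes it below -/
import Mathlib

section
/- Let K be a field of characteristic zero and N, k positive integers. On the polynomial algebra P = MvPolynomial (Fin N × Fin k) K, let x_{ic} denote multiplication by the variable x_{ic} and ∂_{ic} the partial derivative pderiv (i,c). Define operator matrices P_{i,a} (i ∈ Fin N, a ∈ Fin k ⊕ Fin k) and P*_{a,j} by: P_{i, inl c} = x_{ic}, P_{i, inr c} = ∂_{ic}, P*_{inl c, j} = ∂_{jc}, P*_{inr c, j} = −x_{jc}. Then for all a ∈ Fin k ⊕ Fin k and i ∈ Fin N: Σ_{b ∈ Fin k ⊕ Fin k} Σ_{l ∈ Fin N} P_{l,a} ∘ P*_{b,l} ∘ P_{i,b} = Σ_{b ∈ Fin k ⊕ Fin k} Σ_{l ∈ Fin N} P_{i,b} ∘ P*_{b,l} ∘ P_{l,a} + (2k + 1 − N)·P_{i,a}, as K-linear endomorphisms of P. -/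
open MvPolynomial

variable (K : Type*) [Field K] (N k : ℕ)

/-- Multiplication by the variable `x_{ic}` as a `K`-linear endomorphism of
`P = K[x_{ic}]`. -/
noncomputable def xOp (v : Fin N × Fin k) :
    MvPolynomial (Fin N × Fin k) K →ₗ[K] MvPolynomial (Fin N × Fin k) K :=
  LinearMap.mulLeft K (X v)

/-- The partial derivative `∂_{ic}` as a `K`-linear endomorphism of `P = K[x_{ic}]`. -/
noncomputable def dOp (v : Fin N × Fin k) :
    MvPolynomial (Fin N × Fin k) K →ₗ[K] MvPolynomial (Fin N × Fin k) K :=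
  (pderiv v).toLinearMap

lemma pderiv_pderiv_comm {σ R : Type*} [CommRing R] (u v : σ) (p : MvPolynomial σ R) :
    pderiv u (pderiv v p) = pderiv v (pderiv u p) := by
  classical
  induction p using MvPolynomial.induction_on with
  | C a => simp
  | add p q hp hq => simp [hp, hq]
  | mul_X p n ih =>
    simp only [pderiv_mul, map_add, pderiv_X, Pi.single_apply, ih]
    split_ifs <;> simp <;> ring

lemma Dx_comm (v w : Fin N × Fin k) :
    dOp K N k v * xOp K N k w
      = xOp K N k w * dOp K N k v + if v = w then 1 else 0 := by
  apply LinearMap.ext; intro p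
  by_cases h : v = w
  · simp [dOp, xOp, Module.End.mul_apply, pderiv_mul, h]
  · simp [dOp, xOp, Module.End.mul_apply, pderiv_mul, h, pderiv_X_of_ne (Ne.symm h)]

lemma Xx_comm (v w : Fin N × Fin k) :
    xOp K N k v * xOp K N k w = xOp K N k w * xOp K N k v := by
  apply LinearMap.ext; intro p
  simp [xOp, Module.End.mul_apply]; ring

lemma Dd_comm (v w : Fin N × Fin k) :
    dOp K N k v * dOp K N k w = dOp K N k w * dOp K N k v := by
  apply LinearMap.ext; intro p
  simp [dOp, Module.End.mul_apply, pderiv_pderiv_comm]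

lemma XDX (u v w : Fin N × Fin k) :
    xOp K N k u * (dOp K N k v * xOp K N k w)
      = xOp K N k u * xOp K N k w * dOp K N k v + if v = w then xOp K N k u else 0 := by
  rw [Dx_comm]
  split_ifs <;>
    simp [mul_add, mul_assoc]

lemma DXX (u v w : Fin N × Fin k) :
    dOp K N k u * (xOp K N k v * xOp K N k w)
      = xOp K N k v * xOp K N k w * dOp K N k u
        + ((if u = v then xOp K N k w else 0) + (if u = w then xOp K N k v else 0)) := by
  rw [← mul_assoc, Dx_comm, add_mul, mul_assoc, Dx_comm]
  split_ifs <;>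
    simp [mul_add, add_mul, mul_assoc] <;> abel

lemma DDX (u v w : Fin N × Fin k) :
    dOp K N k u * (dOp K N k v * xOp K N k w)
      = xOp K N k w * (dOp K N k u * dOp K N k v)
        + ((if u = w then dOp K N k v else 0) + (if v = w then dOp K N k u else 0)) := by
  rw [Dx_comm, mul_add, ← mul_assoc, Dx_comm, add_mul]
  split_ifs <;>
    simp [mul_add, add_mul, mul_assoc] <;> abel

lemma DXD (u v w : Fin N × Fin k) :
    dOp K N k u * (xOp K N k v * dOp K N k w)
      = xOp K N k v * (dOp K N k u * dOp K N k w)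
        + (if u = v then dOp K N k w else 0) := by
  rw [← mul_assoc, Dx_comm, add_mul]
  split_ifs <;>
    simp [mul_assoc]

/-- The operator matrix `P = [X D]`: `P_{i, inl c} = x_{ic}`, `P_{i, inr c} = ∂_{ic}`. -/
noncomputable def POp (i : Fin N) (a : Fin k ⊕ Fin k) :
    MvPolynomial (Fin N × Fin k) K →ₗ[K] MvPolynomial (Fin N × Fin k) K :=
  match a with
  | Sum.inl c => xOp K N k (i, c)
  | Sum.inr c => dOp K N k (i, c)

/-- The symplectic conjugate transpose `P* = [Dᵗ; −Xᵗ]`: `P*_{inl c, j} = ∂_{jc}`,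
`P*_{inr c, j} = −x_{jc}`. -/
noncomputable def PstarOp (a : Fin k ⊕ Fin k) (j : Fin N) :
    MvPolynomial (Fin N × Fin k) K →ₗ[K] MvPolynomial (Fin N × Fin k) K :=
  match a with
  | Sum.inl c => dOp K N k (j, c)
  | Sum.inr c => - xOp K N k (j, c)

/-- **convolution formula.** For all `a ∈ Fin k ⊕ Fin k` and `i ∈ Fin N`:
`Σ_{b,l} P_{la} ∘ P*_{bl} ∘ P_{ib} = Σ_{b,l} P_{ib} ∘ P*_{bl} ∘ P_{la} + (2k + 1 − N)·P_{ia}`. -/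
theorem convolution_formula [CharZero K] (hN : 0 < N) (hk : 0 < k)
    (a : Fin k ⊕ Fin k) (i : Fin N) :
    ∑ b : Fin k ⊕ Fin k, ∑ l : Fin N, POp K N k l a ∘ₗ PstarOp K N k b l ∘ₗ POp K N k i b
      = (∑ b : Fin k ⊕ Fin k, ∑ l : Fin N, POp K N k i b ∘ₗ PstarOp K N k b l ∘ₗ POp K N k l a)
        + (2 * (k : K) + 1 - (N : K)) • POp K N k i a := by
  rcases a with c | c
  · simp only [Fintype.sum_sum_type, POp, PstarOp, ← Module.End.mul_eq_comp, neg_mul, mul_neg,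
      XDX, DXX, Prod.mk.injEq, and_true, true_and]
    have hneg : ∀ u v w : Fin N × Fin k, xOp K N k u * ((-xOp K N k v) * dOp K N k w)
        = -(xOp K N k u * (xOp K N k v * dOp K N k w)) := by
      intro u v w
      apply LinearMap.ext; intro p
      simp [xOp, dOp, Module.End.mul_apply]
    have hneg2 : ∀ u v w : Fin N × Fin k, dOp K N k u * ((-xOp K N k v) * xOp K N k w)
        = -(dOp K N k u * (xOp K N k v * xOp K N k w)) := by
      intro u v w
      apply LinearMap.ext; intro p
      simp [xOp, dOp, Module.End.mul_apply, pderiv_mul]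
    simp only [hneg, hneg2, DXX, Prod.mk.injEq, and_true, true_and, ite_and]
    simp only [Finset.sum_add_distrib, Finset.sum_neg_distrib, Finset.sum_ite_eq,
      Finset.sum_ite_eq', Finset.mem_univ, if_true, Finset.sum_const, Finset.card_univ,
      Fintype.card_fin, smul_ite, smul_zero, neg_add_rev]
    have e1 : (∑ x : Fin k, ∑ l : Fin N, xOp K N k (l, c) * xOp K N k (i, x) * dOp K N k (l, x))
        = ∑ x : Fin k, ∑ l : Fin N, xOp K N k (i, x) * xOp K N k (l, c) * dOp K N k (l, x) := by
      refine Finset.sum_congr rfl fun x _ => Finset.sum_congr rfl fun l _ => ?_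
      rw [Xx_comm]
    have e2 : (∑ x : Fin k, ∑ l : Fin N, xOp K N k (l, c) * (xOp K N k (l, x) * dOp K N k (i, x)))
        = ∑ x : Fin k, ∑ l : Fin N, xOp K N k (l, x) * xOp K N k (l, c) * dOp K N k (i, x) := by
      refine Finset.sum_congr rfl fun x _ => Finset.sum_congr rfl fun l _ => ?_
      rw [← mul_assoc, Xx_comm]
    rw [e1, e2, ← Nat.cast_smul_eq_nsmul K k, ← Nat.cast_smul_eq_nsmul K N]
    module
  · simp only [Fintype.sum_sum_type, POp, PstarOp, ← Module.End.mul_eq_comp]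
    have hneg3 : ∀ u v w : Fin N × Fin k, dOp K N k u * (-xOp K N k v * dOp K N k w)
        = -(dOp K N k u * (xOp K N k v * dOp K N k w)) := by
      intro u v w
      apply LinearMap.ext; intro p
      simp [xOp, dOp, Module.End.mul_apply, pderiv_mul]
    simp only [hneg3, DDX, DXD, Prod.mk.injEq, and_true, true_and, ite_and]
    simp only [Finset.sum_add_distrib, Finset.sum_neg_distrib, Finset.sum_ite_eq,
      Finset.sum_ite_eq', Finset.mem_univ, if_true, Finset.sum_const, Finset.card_univ,
      Fintype.card_fin, smul_ite, smul_zero, neg_add_rev]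
    have e3 : (∑ x : Fin k, ∑ l : Fin N, xOp K N k (i, x) * (dOp K N k (l, c) * dOp K N k (l, x)))
        = ∑ x : Fin k, ∑ l : Fin N, xOp K N k (i, x) * (dOp K N k (l, x) * dOp K N k (l, c)) := by
      refine Finset.sum_congr rfl fun x _ => Finset.sum_congr rfl fun l _ => ?_
      rw [Dd_comm]
    have e4 : (∑ x : Fin k, ∑ l : Fin N, xOp K N k (l, x) * (dOp K N k (l, c) * dOp K N k (i, x)))
        = ∑ x : Fin k, ∑ l : Fin N, xOp K N k (l, x) * (dOp K N k (i, x) * dOp K N k (l, c)) := by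
      refine Finset.sum_congr rfl fun x _ => Finset.sum_congr rfl fun l _ => ?_
      rw [Dd_comm]
    rw [e3, e4, ← Nat.cast_smul_eq_nsmul K k, ← Nat.cast_smul_eq_nsmul K N]
    module
end

section
/- Let K be a field of characteristic zero and N, k positive integers. With the operator matrices P_{i,a} and P*_{a,j} on P = MvPolynomial (Fin N × Fin k) K defined by P_{i, inl c} = x_{ic}, P_{i, inr c} = ∂_{ic}, P*_{inl c, j} = ∂_{jc}, P*_{inr c, j} = −x_{jc}, set L'_{ab} = Σ_{l ∈ Fin N} P_{l,a} ∘ P*_{b,l} + (N/2)·δ_{ab}·id for a, b ∈ Fin k ⊕ Fin k, and RF_{ij} = Σ_{a ∈ Fin k ⊕ Fin k} P_{i,a} ∘ P*_{a,j} + k·δ_{ij}·id for i, j ∈ Fin N. Then for all i, j ∈ Fin N: Σ_{a,b ∈ Fin k ⊕ Fin k} L'_{ab} ∘ P_{i,b} ∘ P*_{a,j} = Σ_{l ∈ Fin N} RF_{il} ∘ RF_{lj} − (N/2 − 1)·RF_{ij} + k·(N/2 − k − 1)·δ_{ij}·id, as K-linear endomorphisms of P. -/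
open MvPolynomial

variable (K : Type*) [Field K] (N k : ℕ)

/-- `L'_{ab} = Σ_l P_{la} ∘ P*_{bl} + (N/2)·δ_{ab}·id`, the oscillator image of the
standard generators of `sp_{2k}`. -/
noncomputable def LFOp (a b : Fin k ⊕ Fin k) :
    MvPolynomial (Fin N × Fin k) K →ₗ[K] MvPolynomial (Fin N × Fin k) K :=
  (∑ l : Fin N, POp K N k l a ∘ₗ PstarOp K N k b l)
    + ((N : K) / 2) • (if a = b then LinearMap.id else 0)

/-- `RF_{ij} = Σ_a P_{ia} ∘ P*_{aj} + k·δ_{ij}·id`, the oscillator image of the standard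
generators of `o_N`. -/
noncomputable def RFOp (i j : Fin N) :
    MvPolynomial (Fin N × Fin k) K →ₗ[K] MvPolynomial (Fin N × Fin k) K :=
  (∑ a : Fin k ⊕ Fin k, POp K N k i a ∘ₗ PstarOp K N k a j)
    + (k : K) • (if i = j then LinearMap.id else 0)

lemma dx_comm (v w : Fin N × Fin k) :
    dOp K N k v ∘ₗ xOp K N k w
      = xOp K N k w ∘ₗ dOp K N k v + if v = w then LinearMap.id else 0 := by
  ext p
  by_cases h : v = w <;>
    simp [dOp, xOp, h, pderiv_mul, pderiv_X, Pi.single_apply, mul_comm]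

lemma xx_comm (v w : Fin N × Fin k) :
    xOp K N k v ∘ₗ xOp K N k w = xOp K N k w ∘ₗ xOp K N k v := by
  ext p; simp [xOp]; ring

lemma pderiv_pderiv_comm_s10 (v w : Fin N × Fin k) (p : MvPolynomial (Fin N × Fin k) K) :
    pderiv v (pderiv w p) = pderiv w (pderiv v p) := by
  induction p using MvPolynomial.induction_on with
  | C a => simp
  | add p q hp hq => simp [hp, hq]
  | mul_X p n hp =>
      simp only [pderiv_mul, pderiv_X, Pi.single_apply, map_add, hp]
      split_ifs <;> simp [hp] <;> ring

lemma dd_comm (v w : Fin N × Fin k) :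
    dOp K N k v ∘ₗ dOp K N k w = dOp K N k w ∘ₗ dOp K N k v := by
  apply LinearMap.ext; intro p
  exact pderiv_pderiv_comm_s10 K N k v w p

/-- Euler-type operator `E_{il} = Σ_c x_{ic} ∂_{lc}`. -/

noncomputable def EOp (i l : Fin N) :
    MvPolynomial (Fin N × Fin k) K →ₗ[K] MvPolynomial (Fin N × Fin k) K :=
  ∑ c : Fin k, xOp K N k (i, c) ∘ₗ dOp K N k (l, c)

lemma ite_comp {M : Type*} [AddCommMonoid M] [Module K M] (p : Prop) [Decidable p]
    (f g h : M →ₗ[K] M) : (if p then f else g) ∘ₗ h = if p then f ∘ₗ h else g ∘ₗ h := by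
  split_ifs <;> rfl

lemma comp_ite {M : Type*} [AddCommMonoid M] [Module K M] (p : Prop) [Decidable p]
    (f g h : M →ₗ[K] M) : h ∘ₗ (if p then f else g) = if p then h ∘ₗ f else h ∘ₗ g := by
  split_ifs <;> rfl

lemma sum_comp' {ι M : Type*} [AddCommMonoid M] [Module K M] (s : Finset ι)
    (f : ι → (M →ₗ[K] M)) (g : M →ₗ[K] M) :
    (∑ x ∈ s, f x) ∘ₗ g = ∑ x ∈ s, f x ∘ₗ g := by
  apply LinearMap.ext; intro p
  simp [LinearMap.sum_apply]

lemma comp_sum' {ι M : Type*} [AddCommMonoid M] [Module K M] (s : Finset ι)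
    (f : ι → (M →ₗ[K] M)) (g : M →ₗ[K] M) :
    g ∘ₗ (∑ x ∈ s, f x) = ∑ x ∈ s, g ∘ₗ f x := by
  apply LinearMap.ext; intro p
  simp [LinearMap.sum_apply]

lemma E_x (i l m : Fin N) (c : Fin k) :
    EOp K N k i l ∘ₗ xOp K N k (m, c)
      = xOp K N k (m, c) ∘ₗ EOp K N k i l + if l = m then xOp K N k (i, c) else 0 := by
  have h : ∀ c' : Fin k,
      (xOp K N k (i, c') ∘ₗ dOp K N k (l, c')) ∘ₗ xOp K N k (m, c)
        = xOp K N k (m, c) ∘ₗ (xOp K N k (i, c') ∘ₗ dOp K N k (l, c'))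
          + if (l, c') = (m, c) then xOp K N k (i, c') else 0 := by
    intro c'
    rw [LinearMap.comp_assoc, dx_comm, LinearMap.comp_add, comp_ite,
      ← LinearMap.comp_assoc, xx_comm, LinearMap.comp_assoc]
    simp
  simp only [EOp, sum_comp' K]
  simp only [h, Finset.sum_add_distrib, ← comp_sum' K _ _]
  congr 1
  by_cases hlm : l = m
  · subst hlm; simp [Prod.ext_iff]
  · simp [Prod.ext_iff, hlm]

lemma E_d (i l m : Fin N) (c : Fin k) :
    EOp K N k i l ∘ₗ dOp K N k (m, c)
      = dOp K N k (m, c) ∘ₗ EOp K N k i l - if i = m then dOp K N k (l, c) else 0 := by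
  have h : ∀ c' : Fin k,
      (xOp K N k (i, c') ∘ₗ dOp K N k (l, c')) ∘ₗ dOp K N k (m, c)
        = dOp K N k (m, c) ∘ₗ (xOp K N k (i, c') ∘ₗ dOp K N k (l, c'))
          - if (m, c) = (i, c') then dOp K N k (l, c') else 0 := by
    intro c'
    have hx : xOp K N k (i, c') ∘ₗ dOp K N k (m, c)
        = dOp K N k (m, c) ∘ₗ xOp K N k (i, c')
          - if (m, c) = (i, c') then LinearMap.id else 0 := by
      rw [dx_comm]; abel
    rw [LinearMap.comp_assoc, dd_comm, ← LinearMap.comp_assoc, hx,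
      LinearMap.sub_comp, ite_comp, LinearMap.comp_assoc]
    simp
  simp only [EOp, sum_comp' K]
  simp only [h, Finset.sum_sub_distrib, ← comp_sum' K _ _]
  congr 1
  by_cases him : i = m
  · subst him; simp [Prod.ext_iff, eq_comm]
  · have : (m = i) ↔ False := ⟨fun h => him h.symm, False.elim⟩
    simp [Prod.ext_iff, this, him]

lemma sumPP (i j : Fin N) :
    ∑ a : Fin k ⊕ Fin k, POp K N k i a ∘ₗ PstarOp K N k a j
      = EOp K N k i j - EOp K N k j i - (k : K) • (if i = j then LinearMap.id else 0) := by
  rw [Fintype.sum_sum_type]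
  have h1 : ∀ c : Fin k, POp K N k i (Sum.inl c) ∘ₗ PstarOp K N k (Sum.inl c) j
      = xOp K N k (i, c) ∘ₗ dOp K N k (j, c) := fun c => rfl
  have h2 : ∀ c : Fin k, POp K N k i (Sum.inr c) ∘ₗ PstarOp K N k (Sum.inr c) j
      = -(xOp K N k (j, c) ∘ₗ dOp K N k (i, c))
        - if i = j then LinearMap.id else 0 := by
    intro c
    show dOp K N k (i, c) ∘ₗ (- xOp K N k (j, c)) = _
    rw [LinearMap.comp_neg, dx_comm]
    by_cases h : i = j <;> simp [Prod.ext_iff, h] <;> abel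
  simp only [h1, h2, Finset.sum_sub_distrib, Finset.sum_neg_distrib, Finset.sum_const,
    Finset.card_univ, Fintype.card_fin]
  rw [← EOp, ← EOp]
  rw [Nat.cast_smul_eq_nsmul]; abel

lemma RF_eq (i j : Fin N) : RFOp K N k i j = EOp K N k i j - EOp K N k j i := by
  rw [RFOp, sumPP]; abel

/-- `Σ_b P*_{bl} ∘ P_{ib} = RF_{il} + k·δ_{il}·id`. -/

lemma sumPstarP (i l : Fin N) :
    ∑ b : Fin k ⊕ Fin k, PstarOp K N k b l ∘ₗ POp K N k i b
      = RFOp K N k i l + (k : K) • (if i = l then LinearMap.id else 0) := by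
  rw [Fintype.sum_sum_type]
  have h1 : ∀ c : Fin k, PstarOp K N k (Sum.inl c) l ∘ₗ POp K N k i (Sum.inl c)
      = xOp K N k (i, c) ∘ₗ dOp K N k (l, c)
        + if i = l then LinearMap.id else 0 := by
    intro c
    show dOp K N k (l, c) ∘ₗ xOp K N k (i, c) = _
    rw [dx_comm]
    by_cases h : i = l <;> simp [Prod.ext_iff, h, eq_comm]
  have h2 : ∀ c : Fin k, PstarOp K N k (Sum.inr c) l ∘ₗ POp K N k i (Sum.inr c)
      = -(xOp K N k (l, c) ∘ₗ dOp K N k (i, c)) := fun c => rfl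
  simp only [h1, h2, Finset.sum_add_distrib, Finset.sum_neg_distrib, Finset.sum_const,
    Finset.card_univ, Fintype.card_fin]
  rw [← EOp, ← EOp, RF_eq, Nat.cast_smul_eq_nsmul]
  abel

/-- `RF_{il} ∘ P_{la} = P_{la} ∘ RF_{il} + P_{ia} − δ_{il}·P_{la}`. -/

lemma RF_P (i l : Fin N) (a : Fin k ⊕ Fin k) :
    RFOp K N k i l ∘ₗ POp K N k l a
      = POp K N k l a ∘ₗ RFOp K N k i l + POp K N k i a
        - if i = l then POp K N k l a else 0 := by
  rw [RF_eq]
  cases a with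
  | inl c =>
      show (EOp K N k i l - EOp K N k l i) ∘ₗ xOp K N k (l, c) = _
      rw [LinearMap.sub_comp, E_x, E_x, LinearMap.comp_sub]
      by_cases h : i = l <;> simp [POp, h] <;> abel
  | inr c =>
      show (EOp K N k i l - EOp K N k l i) ∘ₗ dOp K N k (l, c) = _
      rw [LinearMap.sub_comp, E_d, E_d, LinearMap.comp_sub]
      by_cases h : i = l <;> simp [POp, h] <;> abel

set_option maxHeartbeats 2000000 in
/-- For all `i, j ∈ Fin N`:
`Σ_{a,b} L'_{ab} ∘ P_{ib} ∘ P*_{aj} = Σ_l RF_{il} ∘ RF_{lj} − (N/2 − 1)·RF_{ij}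
  + k·(N/2 − k − 1)·δ_{ij}·id`. -/
theorem transfer_pairing_spo [CharZero K] (hN : 0 < N) (hk : 0 < k) (i j : Fin N) :
    ∑ a : Fin k ⊕ Fin k, ∑ b : Fin k ⊕ Fin k,
        LFOp K N k a b ∘ₗ POp K N k i b ∘ₗ PstarOp K N k a j
      = (∑ l : Fin N, RFOp K N k i l ∘ₗ RFOp K N k l j)
        - ((N : K) / 2 - 1) • RFOp K N k i j
        + ((k : K) * ((N : K) / 2 - (k : K) - 1)) • (if i = j then LinearMap.id else 0) := by
  classical
  have S_eq : ∀ m n : Fin N, ∑ a : Fin k ⊕ Fin k, POp K N k m a ∘ₗ PstarOp K N k a n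
      = RFOp K N k m n - (k : K) • (if m = n then LinearMap.id else 0) := by
    intro m n; exact eq_sub_of_add_eq rfl
  have hPR : ∀ (l : Fin N) (a : Fin k ⊕ Fin k),
      POp K N k l a ∘ₗ RFOp K N k i l
        = RFOp K N k i l ∘ₗ POp K N k l a - POp K N k i a
          + if i = l then POp K N k l a else 0 := by
    intro l a
    rw [RF_P K N k i l a]; abel
  have step1 : ∀ a b : Fin k ⊕ Fin k,
      LFOp K N k a b ∘ₗ POp K N k i b ∘ₗ PstarOp K N k a j
        = (∑ l : Fin N,
            POp K N k l a ∘ₗ ((PstarOp K N k b l ∘ₗ POp K N k i b) ∘ₗ PstarOp K N k a j))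
          + ((N : K) / 2) • (if a = b then POp K N k i b ∘ₗ PstarOp K N k a j else 0) := by
    intro a b
    rw [LFOp, LinearMap.add_comp, sum_comp' K, LinearMap.smul_comp, ite_comp K,
      LinearMap.id_comp, LinearMap.zero_comp]
    rfl
  have step2 : ∀ a : Fin k ⊕ Fin k,
      ∑ b : Fin k ⊕ Fin k, LFOp K N k a b ∘ₗ POp K N k i b ∘ₗ PstarOp K N k a j
        = (∑ l : Fin N, POp K N k l a ∘ₗ
            ((RFOp K N k i l + (k : K) • (if i = l then LinearMap.id else 0))
              ∘ₗ PstarOp K N k a j))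
          + ((N : K) / 2) • (POp K N k i a ∘ₗ PstarOp K N k a j) := by
    intro a
    simp only [step1, Finset.sum_add_distrib]
    congr 1
    · rw [Finset.sum_comm]
      apply Finset.sum_congr rfl; intro l _
      rw [← sumPstarP, ← comp_sum' K]
      congr 1
      rw [← sum_comp' K]
    · rw [← Finset.smul_sum]
      congr 1
      simp
  have comp_smul' : ∀ (f g : MvPolynomial (Fin N × Fin k) K →ₗ[K] MvPolynomial (Fin N × Fin k) K)
      (c : K), f ∘ₗ (c • g) = c • (f ∘ₗ g) := by
    intro f g c; apply LinearMap.ext; intro p; simp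
  have expand_mid : ∀ (l : Fin N) (a : Fin k ⊕ Fin k),
      POp K N k l a ∘ₗ
          ((RFOp K N k i l + (k : K) • (if i = l then LinearMap.id else 0))
            ∘ₗ PstarOp K N k a j)
        = RFOp K N k i l ∘ₗ (POp K N k l a ∘ₗ PstarOp K N k a j)
          - POp K N k i a ∘ₗ PstarOp K N k a j
          + (if i = l then POp K N k l a ∘ₗ PstarOp K N k a j else 0)
          + (k : K) • (if i = l then POp K N k l a ∘ₗ PstarOp K N k a j else 0) := by
    intro l a
    rw [LinearMap.add_comp, LinearMap.comp_add]
    congr 1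
    · show (POp K N k l a ∘ₗ RFOp K N k i l) ∘ₗ PstarOp K N k a j = _
      rw [hPR, LinearMap.add_comp, LinearMap.sub_comp, ite_comp K, LinearMap.zero_comp]
      rfl
    · rw [LinearMap.smul_comp, ite_comp K, LinearMap.id_comp, LinearMap.zero_comp,
        comp_smul', comp_ite K, LinearMap.comp_zero]
  have step3 : ∀ l : Fin N,
      ∑ a : Fin k ⊕ Fin k, POp K N k l a ∘ₗ
          ((RFOp K N k i l + (k : K) • (if i = l then LinearMap.id else 0))
            ∘ₗ PstarOp K N k a j)
        = RFOp K N k i l ∘ₗ RFOp K N k l j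
          - (k : K) • (if l = j then RFOp K N k i l else 0)
          - (RFOp K N k i j - (k : K) • (if i = j then LinearMap.id else 0))
          + (if i = l then RFOp K N k l j - (k : K) • (if l = j then LinearMap.id else 0) else 0)
          + (k : K) • (if i = l then RFOp K N k l j
              - (k : K) • (if l = j then LinearMap.id else 0) else 0) := by
    intro l
    simp only [expand_mid, Finset.sum_add_distrib, Finset.sum_sub_distrib, ← Finset.smul_sum]
    have hsum1 : ∑ a : Fin k ⊕ Fin k, RFOp K N k i l ∘ₗ (POp K N k l a ∘ₗ PstarOp K N k a j)
        = RFOp K N k i l ∘ₗ RFOp K N k l j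
          - (k : K) • (if l = j then RFOp K N k i l else 0) := by
      rw [← comp_sum' K, S_eq, LinearMap.comp_sub, comp_smul', comp_ite K,
        LinearMap.comp_zero]
      rfl
    have hsum2 : ∀ (f : (Fin k ⊕ Fin k) → (MvPolynomial (Fin N × Fin k) K →ₗ[K] MvPolynomial (Fin N × Fin k) K)),
        ∑ a : Fin k ⊕ Fin k, (if i = l then f a else 0)
          = if i = l then ∑ a : Fin k ⊕ Fin k, f a else 0 := by
      intro f; split_ifs <;> simp
    rw [hsum1, hsum2, S_eq, S_eq]
  calc
    ∑ a : Fin k ⊕ Fin k, ∑ b : Fin k ⊕ Fin k,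
        LFOp K N k a b ∘ₗ POp K N k i b ∘ₗ PstarOp K N k a j
      = ∑ a : Fin k ⊕ Fin k,
          ((∑ l : Fin N, POp K N k l a ∘ₗ
              ((RFOp K N k i l + (k : K) • (if i = l then LinearMap.id else 0))
                ∘ₗ PstarOp K N k a j))
            + ((N : K) / 2) • (POp K N k i a ∘ₗ PstarOp K N k a j)) :=
        Finset.sum_congr rfl (fun a _ => step2 a)
    _ = (∑ l : Fin N, ∑ a : Fin k ⊕ Fin k, POp K N k l a ∘ₗ
            ((RFOp K N k i l + (k : K) • (if i = l then LinearMap.id else 0))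
              ∘ₗ PstarOp K N k a j))
          + ((N : K) / 2) • (RFOp K N k i j
              - (k : K) • (if i = j then LinearMap.id else 0)) := by
        rw [Finset.sum_add_distrib, ← Finset.smul_sum, S_eq, Finset.sum_comm]
    _ = (∑ l : Fin N,
            (RFOp K N k i l ∘ₗ RFOp K N k l j
              - (k : K) • (if l = j then RFOp K N k i l else 0)
              - (RFOp K N k i j - (k : K) • (if i = j then LinearMap.id else 0))
              + (if i = l then RFOp K N k l j
                  - (k : K) • (if l = j then LinearMap.id else 0) else 0)
              + (k : K) • (if i = l then RFOp K N k l j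
                  - (k : K) • (if l = j then LinearMap.id else 0) else 0)))
          + ((N : K) / 2) • (RFOp K N k i j
              - (k : K) • (if i = j then LinearMap.id else 0)) := by
        rw [Finset.sum_congr rfl (fun l _ => step3 l)]
    _ = (∑ l : Fin N, RFOp K N k i l ∘ₗ RFOp K N k l j)
          - ((N : K) / 2 - 1) • RFOp K N k i j
          + ((k : K) * ((N : K) / 2 - (k : K) - 1)) •
              (if i = j then LinearMap.id else 0) := by
        rw [Finset.sum_add_distrib, Finset.sum_add_distrib, Finset.sum_sub_distrib,
          Finset.sum_sub_distrib, ← Finset.smul_sum, ← Finset.smul_sum,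
          Finset.sum_ite_eq' Finset.univ j (fun l => RFOp K N k i l),
          Finset.sum_ite_eq Finset.univ i
            (fun l => RFOp K N k l j - (k : K) • (if l = j then LinearMap.id else 0)),
          Finset.sum_const, Finset.card_univ, Fintype.card_fin]
        simp only [Finset.mem_univ, if_true]
        rw [← Nat.cast_smul_eq_nsmul K]
        module
end
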